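/- The log-normal distribution is not determined by its moments: there exists a probability density on (0,∞), distinct from the standard log-normal density f(x) = (1/(x√(2π))) exp(−(log x)²/2), having the same moments of all orders. Concretely, for every a with |a| ≤ 1, the function f_a(x) = f(x)(1 + a sin(2π log x)) is a probability density on (0,∞) whose n-th moment equals that of f for every nonnegative integer n. -/

import Mathlib

/-!
Substituting `x = exp t` turns the `n`-th moment of `f_a` into
`(2π)^(-1/2) ∫ exp (n t - t²/2) (1 + a sin (2π t)) dt`. Completing the square,
`exp (n t - t²/2) = exp (n²/2) exp (-(t - n)²/2)`; since `n` is an integer, translating by `n`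
leaves `sin (2π t)` unchanged, so the perturbation integrates an odd function against a centred
Gaussian and contributes nothing. Every moment of `f_a` is therefore `exp (n²/2)`, independently
of `a`, while `f_a ≥ 0` for `|a| ≤ 1`.
-/

open MeasureTheory Real Set

/-- The standard log-normal density on `(0, ∞)`. -/
noncomputable def logNormalDensity (x : ℝ) : ℝ :=
  (1 / (x * Real.sqrt (2 * Real.pi))) * Real.exp (-(Real.log x) ^ 2 / 2)

/-- The perturbed density `f_a(x) = f(x)(1 + a sin(2π log x))`. -/
noncomputable def perturbedDensity (a x : ℝ) : ℝ :=
  logNormalDensity x * (1 + a * Real.sin (2 * Real.pi * Real.log x))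

theorem Function.Odd.integral_eq_zero {G E : Type*} [MeasurableSpace G] [AddGroup G]
    [MeasurableNeg G] [NormedAddCommGroup E] [NormedSpace ℝ E] {f : G → E} (hf : f.Odd)
    (μ : Measure G) [μ.IsNegInvariant] : ∫ x, f x ∂μ = 0 := by
  have h := integral_neg_eq_self f μ
  simp only [hf.eq, integral_neg] at h
  rw [neg_eq_iff_add_eq_zero, ← two_smul ℝ] at h
  exact (smul_eq_zero.mp h).resolve_left two_ne_zero

theorem integral_comp_log_Ioi_zero {E : Type*} [NormedAddCommGroup E] [NormedSpace ℝ E]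
    (g : ℝ → E) : ∫ x in Ioi (0 : ℝ), x⁻¹ • g (log x) = ∫ t, g t := by
  have h := integral_image_eq_integral_abs_deriv_smul MeasurableSet.univ
    (fun t _ => (hasDerivAt_exp t).hasDerivWithinAt) exp_injective.injOn
    (fun x => x⁻¹ • g (log x))
  rw [image_univ, range_exp, setIntegral_univ] at h
  rw [h]
  congr 1 with t
  rw [log_exp, abs_of_pos (exp_pos t), smul_smul, mul_inv_cancel₀ (exp_pos t).ne', one_smul]

theorem exp_mul_sub_sq_div_two (c t : ℝ) :
    exp (c * t - t ^ 2 / 2) = exp (c ^ 2 / 2) * exp (-(1 / 2) * (t - c) ^ 2) := by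
  rw [← exp_add]
  ring_nf

theorem integrable_exp_mul_sub_sq_div_two (c : ℝ) :
    Integrable fun t : ℝ => exp (c * t - t ^ 2 / 2) := by
  simp_rw [exp_mul_sub_sq_div_two c]
  exact ((integrable_exp_neg_mul_sq (by norm_num : (0 : ℝ) < 1 / 2)).comp_sub_right c).const_mul _

theorem integral_exp_mul_sub_sq_div_two (c : ℝ) :
    ∫ t : ℝ, exp (c * t - t ^ 2 / 2) = √(2 * π) * exp (c ^ 2 / 2) := by
  simp_rw [exp_mul_sub_sq_div_two c]
  rw [integral_const_mul, integral_sub_right_eq_self (fun t => exp (-(1 / 2) * t ^ 2)) c,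
    integral_gaussian, mul_comm]
  congr 2
  ring

theorem integrable_exp_mul_sub_sq_div_two_mul_sin (c b : ℝ) :
    Integrable fun t : ℝ => exp (c * t - t ^ 2 / 2) * sin (b * t) :=
  (integrable_exp_mul_sub_sq_div_two c).mul_bdd (c := 1)
    (by fun_prop) (Filter.Eventually.of_forall fun t => by simpa using abs_sin_le_one (b * t))

theorem integral_exp_mul_sub_sq_div_two_mul_sin_two_pi (n : ℤ) :
    ∫ t : ℝ, exp (n * t - t ^ 2 / 2) * sin (2 * π * t) = 0 := by
  have hodd : (fun t : ℝ => exp (-(1 / 2) * t ^ 2) * sin (2 * π * t)).Odd := fun t => by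
    simp only [neg_sq, mul_neg, sin_neg]
  have hperiodic (t : ℝ) : sin (2 * π * (t + n)) = sin (2 * π * t) := by
    rw [mul_add, mul_comm (2 * π) (n : ℝ), sin_add_int_mul_two_pi]
  simp_rw [exp_mul_sub_sq_div_two (n : ℝ), mul_assoc (exp _)]
  rw [integral_const_mul, ← integral_add_right_eq_self _ (n : ℝ)]
  simp only [add_sub_cancel_right, hperiodic, hodd.integral_eq_zero, mul_zero]

theorem integral_exp_mul_sub_sq_div_two_mul_one_add_sin (a : ℝ) (n : ℤ) :
    ∫ t : ℝ, exp (n * t - t ^ 2 / 2) * (1 + a * sin (2 * π * t))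
      = √(2 * π) * exp (n ^ 2 / 2) := by
  simp_rw [mul_add, mul_one, mul_left_comm _ a]
  rw [integral_add (integrable_exp_mul_sub_sq_div_two _)
      ((integrable_exp_mul_sub_sq_div_two_mul_sin _ _).const_mul a),
    integral_const_mul, integral_exp_mul_sub_sq_div_two_mul_sin_two_pi, mul_zero, add_zero,
    integral_exp_mul_sub_sq_div_two]

theorem logNormalDensity_pos {x : ℝ} (hx : 0 < x) : 0 < logNormalDensity x := by
  unfold logNormalDensity
  have : 0 < √(2 * π) := sqrt_pos.mpr (by positivity)
  positivity

theorem perturbedDensity_zero : perturbedDensity 0 = logNormalDensity := by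
  ext x
  simp [perturbedDensity]

theorem perturbedDensity_nonneg {a x : ℝ} (ha : |a| ≤ 1) (hx : 0 < x) :
    0 ≤ perturbedDensity a x := by
  refine mul_nonneg (logNormalDensity_pos hx).le ?_
  have : |a * sin (2 * π * log x)| ≤ 1 := by
    rw [abs_mul]
    exact mul_le_one₀ ha (abs_nonneg _) (abs_sin_le_one _)
  linarith [neg_abs_le (a * sin (2 * π * log x))]

theorem pow_mul_perturbedDensity {x : ℝ} (a : ℝ) (n : ℕ) (hx : 0 < x) :
    x ^ n * perturbedDensity a x
      = x⁻¹ • (exp (n * log x - log x ^ 2 / 2) * (1 + a * sin (2 * π * log x))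
        / √(2 * π)) := by
  have hxn : x ^ n = exp (n * log x) := by rw [exp_nat_mul, exp_log hx]
  have : 0 < √(2 * π) := sqrt_pos.mpr (by positivity)
  rw [perturbedDensity, logNormalDensity, hxn, sub_eq_add_neg, exp_add, neg_div, smul_eq_mul]
  field_simp

theorem integral_pow_mul_perturbedDensity (a : ℝ) (n : ℕ) :
    ∫ x in Ioi (0 : ℝ), x ^ n * perturbedDensity a x = exp (n ^ 2 / 2) := by
  rw [setIntegral_congr_fun measurableSet_Ioi fun x hx => pow_mul_perturbedDensity a n hx,
    integral_comp_log_Ioi_zero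
      fun t => exp (n * t - t ^ 2 / 2) * (1 + a * sin (2 * π * t)) / √(2 * π),
    integral_div]
  have hgauss := integral_exp_mul_sub_sq_div_two_mul_one_add_sin a n
  push_cast at hgauss
  rw [hgauss, mul_div_cancel_left₀ _ (sqrt_pos.mpr (by positivity)).ne']

theorem perturbedDensity_one_exp_quarter :
    perturbedDensity 1 (exp (1 / 4)) = 2 * logNormalDensity (exp (1 / 4)) := by
  rw [perturbedDensity, log_exp, show 2 * π * (1 / 4) = π / 2 by ring, sin_pi_div_two]
  ring

/-- The log-normal distribution is not determined by its moments: every `f_a` with `|a| ≤ 1`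
is a probability density on `(0,∞)` with the same moments of all orders as `f`, and for some
`a` the density `f_a` differs from `f`. -/
theorem lognormal_not_determined_by_moments :
    (∀ a : ℝ, |a| ≤ 1 →
      (∀ x ∈ Ioi (0 : ℝ), 0 ≤ perturbedDensity a x) ∧
      (∫ x in Ioi (0 : ℝ), perturbedDensity a x = 1) ∧
      (∀ n : ℕ, ∫ x in Ioi (0 : ℝ), x ^ n * perturbedDensity a x
        = ∫ x in Ioi (0 : ℝ), x ^ n * logNormalDensity x)) ∧
    (∃ a : ℝ, |a| ≤ 1 ∧ ∃ x ∈ Ioi (0 : ℝ), perturbedDensity a x ≠ logNormalDensity x) := by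
  refine ⟨fun a ha => ⟨fun x hx => perturbedDensity_nonneg ha hx, ?_, fun n => ?_⟩,
    ⟨1, by norm_num, exp (1 / 4), exp_pos _, ?_⟩⟩
  · simpa using integral_pow_mul_perturbedDensity a 0
  · rw [← perturbedDensity_zero, integral_pow_mul_perturbedDensity,
      integral_pow_mul_perturbedDensity]
  · rw [perturbedDensity_one_exp_quarter]
    linarith [logNormalDensity_pos (exp_pos (1 / 4))]
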